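/- arXiv:1603.07201 — 6 statements merged into one kernel-verified Lean document; each statement's English description precedes it below -/
import Mathlib

section
/- Let ρ = (ρ_J : J ⊆ I) be a probability vector on nonempty subsets of a finite set I, 𝒥_ρ = {J : ρ_J > 0} its support, and 𝒟^ρ the partition of I generated by 𝒥_ρ. If M ⊆ L for some atom L of 𝒟^ρ, then the recombination operator preserves the marginal on M: Ξ[μ]_M = μ_M, where Ξ[μ] = ∑_{J} ρ_J μ_J ⊗ μ_{J^c}. -/
/-! Since `M` lies in an atom of `𝒟^ρ`, every `J` with `ρ_J > 0` satisfies `M ⊆ J` or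
`M ⊆ Jᶜ`. In either case the `M`-marginal of `μ_J ⊗ μ_{Jᶜ}` is `μ_M`: writing a configuration
as `J.piecewise z w`, summing out the block not containing `M` only contributes the total mass
`1` of `μ`. Averaging over `ρ` gives `Ξ[μ]_M = μ_M`. -/

open scoped Classical
open Finset

universe u

section Meas
variable {I : Type u} [Fintype I] [DecidableEq I]
variable {A : I → Type*} [∀ i, Fintype (A i)] [∀ i, DecidableEq (A i)]

/-- The marginal of `μ` on the coordinate set `J`, viewed as a function of the full
configuration that only depends on the coordinates in `J`. -/
noncomputable def marginal (μ : (∀ i, A i) → ℝ) (J : Finset I) : (∀ i, A i) → ℝ :=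
  fun x => ∑ y : ∀ i, A i, if ∀ i ∈ J, y i = x i then μ y else 0

def IsProbMeasure (μ : (∀ i, A i) → ℝ) : Prop :=
  (∀ x, 0 ≤ μ x) ∧ ∑ x : ∀ i, A i, μ x = 1

/-- `ν` is (induced by) a probability measure on the coordinates in `L`:
it depends only on the coordinates in `L`, is nonnegative, and its total mass,
summed over the `L`-coordinates (the off-`L` coordinates being frozen), is `1`. -/
def IsProbOn (L : Finset I) (ν : (∀ i, A i) → ℝ) : Prop :=
  (∀ x y : ∀ i, A i, (∀ i ∈ L, x i = y i) → ν x = ν y) ∧ (∀ x, 0 ≤ ν x) ∧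
  (∀ x₀ : ∀ i, A i, ∑ y : ∀ i, A i, (if ∀ i, i ∉ L → y i = x₀ i then ν y else 0) = 1)

/-- The recombination transformation `Ξ[μ] = ∑_J ρ_J μ_J ⊗ μ_{Jᶜ}`. -/
noncomputable def Xi (ρ : Finset I → ℝ) (μ : (∀ i, A i) → ℝ) : (∀ i, A i) → ℝ :=
  fun x => ∑ J : Finset I, ρ J * (marginal μ J x * marginal μ Jᶜ x)

end Meas

section Comb
variable {I : Type u} [Fintype I] [DecidableEq I]

/-- `ρ` is a probability vector on nonempty subsets of `I`. -/
def IsProbVec (ρ : Finset I → ℝ) : Prop :=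
  ρ ∅ = 0 ∧ (∀ J, 0 ≤ ρ J) ∧ ∑ J : Finset I, ρ J = 1

end Comb

/-- `𝒴(𝒥_ρ)`: the closure of the support of `ρ` under nonempty intersections. -/
inductive inY {I : Type u} [Fintype I] [DecidableEq I] (ρ : Finset I → ℝ) : Finset I → Prop
  | base (J : Finset I) : 0 < ρ J → inY ρ J
  | inter (K J : Finset I) : inY ρ K → 0 < ρ J → (K ∩ J).Nonempty → inY ρ (K ∩ J)

section Comb2
variable {I : Type u} [Fintype I] [DecidableEq I]

/-- `L` is an atom of the partition `𝒟^ρ` generated by the support of `ρ`. -/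
def isAtomD (ρ : Finset I → ℝ) (L : Finset I) : Prop :=
  inY ρ L ∧ ∀ J : Finset I, 0 < ρ J → (J ∩ L = L ∨ J ∩ L = ∅)

/-- The coefficients `ρ^K_M` of Definition 2.2:
`ρ^K_M = ∑_{J ∈ 𝒥_ρ, J∩K = M} ρ_J` for `M ≠ K`, and
`ρ^K_K = ∑_{J ∈ 𝒥_ρ, J∩K = K ∨ J∩K = ∅} ρ_J`. -/
noncomputable def rhoC (ρ : Finset I → ℝ) (K M : Finset I) : ℝ :=
  if M = K then
    ∑ J ∈ univ.filter (fun J : Finset I => 0 < ρ J ∧ (J ∩ K = K ∨ J ∩ K = ∅)), ρ J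
  else
    ∑ J ∈ univ.filter (fun J : Finset I => 0 < ρ J ∧ J ∩ K = M), ρ J

/-- A finite-set partition of `I`. -/
def IsPartitionF (𝒟 : Finset (Finset I)) : Prop :=
  (∀ L ∈ 𝒟, L.Nonempty) ∧
  (∀ L ∈ 𝒟, ∀ L' ∈ 𝒟, L ≠ L' → L ∩ L' = ∅) ∧
  𝒟.biUnion id = Finset.univ

end Comb2

theorem agree_on_and_compl_iff_eq_piecewise {I : Type*} [DecidableEq I] [Fintype I]
    {A : I → Type*} (J : Finset I) (z w y : ∀ i, A i) :
    ((∀ i ∈ J, z i = y i) ∧ ∀ i ∈ Jᶜ, w i = y i) ↔ y = J.piecewise z w := by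
  constructor
  · rintro ⟨hz, hw⟩
    funext i
    by_cases hi : i ∈ J
    · rw [piecewise_eq_of_mem _ _ _ hi, hz i hi]
    · rw [piecewise_eq_of_notMem _ _ _ hi, hw i (mem_compl.2 hi)]
  · rintro rfl
    exact ⟨fun i hi => (piecewise_eq_of_mem _ _ _ hi).symm,
      fun i hi => (piecewise_eq_of_notMem _ _ _ (mem_compl.1 hi)).symm⟩

section Recombination
variable {I : Type u} [Fintype I] [DecidableEq I]
variable {A : I → Type*} [∀ i, Fintype (A i)] [∀ i, DecidableEq (A i)]

theorem marginal_const_mul (μ : (∀ i, A i) → ℝ) (c : ℝ) (M : Finset I) (x : ∀ i, A i) :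
    marginal (fun y => c * μ y) M x = c * marginal μ M x := by
  simp only [marginal, mul_sum, mul_ite, mul_zero]

theorem marginal_sum {ι : Type*} (s : Finset ι) (f : ι → (∀ i, A i) → ℝ) (M : Finset I)
    (x : ∀ i, A i) :
    marginal (fun y => ∑ j ∈ s, f j y) M x = ∑ j ∈ s, marginal (f j) M x := by
  simp only [marginal, ite_sum_zero]
  exact sum_comm

theorem marginal_mul_marginal_compl_of_subset (μ ν : (∀ i, A i) → ℝ) {J M : Finset I}
    (hMJ : M ⊆ J) (x : ∀ i, A i) :
    marginal (fun y => marginal μ J y * marginal ν Jᶜ y) M x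
      = marginal μ M x * ∑ w, ν w := by
  have hsplit : ∀ z w : ∀ i, A i,
      (∀ i ∈ M, J.piecewise z w i = x i) ↔ ∀ i ∈ M, z i = x i := fun z w =>
    forall₂_congr fun i hi => by rw [piecewise_eq_of_mem _ _ _ (hMJ hi)]
  calc marginal (fun y => marginal μ J y * marginal ν Jᶜ y) M x
      = ∑ z : ∀ i, A i, ∑ w : ∀ i, A i, ∑ y : ∀ i, A i,
          if (∀ i ∈ J, z i = y i) ∧ ∀ i ∈ Jᶜ, w i = y i then
            (if ∀ i ∈ M, y i = x i then μ z * ν w else 0) else 0 := by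
        simp only [marginal, sum_mul_sum, ite_sum_zero, ite_mul, mul_ite, zero_mul, mul_zero]
        rw [sum_comm]
        refine sum_congr rfl fun z _ => ?_
        rw [sum_comm]
        refine sum_congr rfl fun w _ => sum_congr rfl fun y _ => ?_
        split_ifs <;> simp_all
    _ = ∑ z : ∀ i, A i, ∑ w : ∀ i, A i, if ∀ i ∈ M, z i = x i then μ z * ν w else 0 := by
        simp only [agree_on_and_compl_iff_eq_piecewise, sum_ite_eq', mem_univ, if_true, hsplit]
    _ = marginal μ M x * ∑ w, ν w := by
        rw [marginal, sum_mul]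
        simp only [ite_mul, zero_mul, mul_sum]

theorem marginal_mul_marginal_compl_of_subset_or_subset_compl {J M : Finset I}
    (h : M ⊆ J ∨ M ⊆ Jᶜ) (μ : (∀ i, A i) → ℝ) (x : ∀ i, A i) :
    marginal (fun y => marginal μ J y * marginal μ Jᶜ y) M x = marginal μ M x * ∑ y, μ y := by
  rcases h with hMJ | hMJc
  · exact marginal_mul_marginal_compl_of_subset μ μ hMJ x
  · simpa only [compl_compl, mul_comm (marginal μ Jᶜ _)]
      using marginal_mul_marginal_compl_of_subset μ μ hMJc x

theorem marginal_Xi_of_subset_or_subset_compl {ρ : Finset I → ℝ} {M : Finset I}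
    (hM : ∀ J, ρ J ≠ 0 → M ⊆ J ∨ M ⊆ Jᶜ) (μ : (∀ i, A i) → ℝ) (x : ∀ i, A i) :
    marginal (Xi ρ μ) M x = (∑ J, ρ J) * (marginal μ M x * ∑ y, μ y) := by
  unfold Xi
  rw [marginal_sum, sum_mul]
  refine sum_congr rfl fun J _ => ?_
  rw [marginal_const_mul]
  by_cases hJ : ρ J = 0
  · rw [hJ, zero_mul, zero_mul]
  · rw [marginal_mul_marginal_compl_of_subset_or_subset_compl (hM J hJ)]

end Recombination

theorem isAtomD.subset_or_subset_compl {I : Type*} [Fintype I] [DecidableEq I]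
    {ρ : Finset I → ℝ} {L M J : Finset I} (hL : isAtomD ρ L) (hML : M ⊆ L) (hJ : 0 < ρ J) :
    M ⊆ J ∨ M ⊆ Jᶜ :=
  (hL.2 J hJ).imp (fun h => hML.trans (inter_eq_right.1 h))
    (fun h => hML.trans (subset_compl_iff_disjoint_left.2 (disjoint_iff_inter_eq_empty.2 h)))

/-- if `M` is contained in an atom of `𝒟^ρ`, then `Ξ[μ]_M = μ_M`. -/
theorem Xi_preserves_atom_marginal {I : Type u} [Fintype I] [DecidableEq I]
    {A : I → Type*} [∀ i, Fintype (A i)] [∀ i, DecidableEq (A i)]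
    (ρ : Finset I → ℝ) (hρ : IsProbVec ρ)
    (μ : (∀ i, A i) → ℝ) (hμ : IsProbMeasure μ)
    (L M : Finset I) (hL : isAtomD ρ L) (hML : M ⊆ L) :
    marginal (Xi ρ μ) M = marginal μ M := by
  have hM : ∀ J, ρ J ≠ 0 → M ⊆ J ∨ M ⊆ Jᶜ := fun J hJ =>
    hL.subset_or_subset_compl hML ((hρ.2.1 J).lt_of_ne' hJ)
  funext x
  rw [marginal_Xi_of_subset_or_subset_compl hM, hρ.2.2, hμ.2, one_mul, mul_one]
end

section
/- Let 𝒟 be a partition of I finer than 𝒟^ρ and for each atom L ∈ 𝒟 let μ^L be a probability measure on ∏_{i∈L} A_i. Then μ = ⊗_{L∈𝒟} μ^L is a fixed point of the recombination operator: Ξ[μ] = μ. -/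
/-! If `ρ_J > 0`, every block of `𝒟` lies in an atom of `𝒟^ρ`, hence inside `J` or inside `Jᶜ`.
The product measure then splits as (product over the blocks in `J`) × (product over the blocks
in `Jᶜ`), and each factor is a probability measure on its own coordinates, so the marginals of
`μ` on `J` and on `Jᶜ` are exactly these two factors: `μ_J ⊗ μ_{Jᶜ} = μ`. Averaging over `J`
with the weights `ρ_J` gives `Ξ[μ] = μ`. The one computation is that a product of probability
measures on disjoint coordinate sets is a probability measure on their union, which is Fubini
over the fibres of "agreeing with `x` off a set of coordinates". -/

open scoped Classical
open Finset

universe u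

section Fixpoint
variable {I : Type u} [Fintype I] [DecidableEq I]
variable {A : I → Type*} [∀ i, Fintype (A i)] [∀ i, DecidableEq (A i)]

def agreeingOff (s : Finset I) (x : ∀ i, A i) : Finset (∀ i, A i) :=
  univ.filter fun y => ∀ i, i ∉ s → y i = x i

lemma mem_agreeingOff {s : Finset I} {x y : ∀ i, A i} :
    y ∈ agreeingOff s x ↔ ∀ i, i ∉ s → y i = x i := by
  simp [agreeingOff]

lemma marginal_eq_sum_agreeingOff (μ : (∀ i, A i) → ℝ) (J : Finset I) (x : ∀ i, A i) :
    marginal μ J x = ∑ y ∈ agreeingOff Jᶜ x, μ y := by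
  simp [marginal, agreeingOff, sum_filter]

lemma isProbOn_iff_sum_agreeingOff {L : Finset I} {ν : (∀ i, A i) → ℝ} :
    IsProbOn L ν ↔ (∀ x y : ∀ i, A i, (∀ i ∈ L, x i = y i) → ν x = ν y) ∧ (∀ x, 0 ≤ ν x) ∧
      ∀ x, ∑ y ∈ agreeingOff L x, ν y = 1 := by
  simp only [IsProbOn, agreeingOff, sum_filter]

lemma IsProbOn.sum_agreeingOff {L : Finset I} {ν : (∀ i, A i) → ℝ} (h : IsProbOn L ν)
    (x : ∀ i, A i) : ∑ y ∈ agreeingOff L x, ν y = 1 :=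
  (isProbOn_iff_sum_agreeingOff.mp h).2.2 x

lemma sum_agreeingOff_union {L K : Finset I} (hLK : Disjoint L K) (f : (∀ i, A i) → ℝ)
    (x : ∀ i, A i) :
    ∑ y ∈ agreeingOff (L ∪ K) x, f y = ∑ w ∈ agreeingOff K x, ∑ y ∈ agreeingOff L w, f y := by
  have hfiber : ∀ w ∈ agreeingOff K x, agreeingOff L w =
      (agreeingOff (L ∪ K) x).filter fun y => K.piecewise y x = w := by
    intro w hw
    rw [mem_agreeingOff] at hw
    ext y
    simp only [mem_filter, mem_agreeingOff, mem_union, not_or, funext_iff, piecewise]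
    constructor
    · intro hy
      refine ⟨fun i hi => (hy i hi.1).trans (hw i hi.2), fun i => ?_⟩
      split_ifs with hiK
      · exact hy i (disjoint_right.mp hLK hiK)
      · exact (hw i hiK).symm
    · rintro ⟨hy, hyw⟩ i hiL
      by_cases hiK : i ∈ K
      · simpa [hiK] using hyw i
      · rw [hy i ⟨hiL, hiK⟩, ← hw i hiK]
  have hmaps : ∀ y ∈ agreeingOff (L ∪ K) x, K.piecewise y x ∈ agreeingOff K x := by
    intro y _
    rw [mem_agreeingOff]
    intro i hiK
    simp [hiK]
  calc ∑ y ∈ agreeingOff (L ∪ K) x, f y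
      = ∑ w ∈ agreeingOff K x, ∑ y ∈ agreeingOff (L ∪ K) x with K.piecewise y x = w, f y :=
        (sum_fiberwise_of_maps_to hmaps f).symm
    _ = _ := sum_congr rfl fun w hw => by rw [hfiber w hw]

lemma IsProbOn.mul {L K : Finset I} {ν ν' : (∀ i, A i) → ℝ} (hν : IsProbOn L ν)
    (hν' : IsProbOn K ν') (hLK : Disjoint L K) : IsProbOn (L ∪ K) fun y => ν y * ν' y := by
  refine isProbOn_iff_sum_agreeingOff.mpr ⟨fun x y hxy => ?_, fun x => ?_, fun x => ?_⟩
  · rw [hν.1 x y fun i hi => hxy i (mem_union_left K hi),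
      hν'.1 x y fun i hi => hxy i (mem_union_right L hi)]
  · exact mul_nonneg (hν.2.1 x) (hν'.2.1 x)
  · calc ∑ y ∈ agreeingOff (L ∪ K) x, ν y * ν' y
        = ∑ w ∈ agreeingOff K x, ∑ y ∈ agreeingOff L w, ν y * ν' w := by
          rw [sum_agreeingOff_union hLK]
          refine sum_congr rfl fun w _ => sum_congr rfl fun y hy => ?_
          rw [mem_agreeingOff] at hy
          rw [hν'.1 y w fun i hi => hy i (disjoint_right.mp hLK hi)]
      _ = ∑ w ∈ agreeingOff K x, ν' w := by
          simp only [← sum_mul, hν.sum_agreeingOff, one_mul]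
      _ = 1 := hν'.sum_agreeingOff x

lemma IsProbOn.prod {S : Finset (Finset I)} (hS : (S : Set (Finset I)).PairwiseDisjoint id)
    {ν : Finset I → (∀ i, A i) → ℝ} (hν : ∀ L ∈ S, IsProbOn L (ν L)) :
    IsProbOn (S.biUnion id) fun y => ∏ L ∈ S, ν L y := by
  induction S using Finset.induction_on with
  | empty =>
    refine isProbOn_iff_sum_agreeingOff.mpr ⟨fun _ _ _ => rfl, fun _ => zero_le_one, fun x => ?_⟩
    have : agreeingOff (∅ : Finset I) x = {x} := by
      ext y
      simp [mem_agreeingOff, funext_iff]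
    simp [this]
  | @insert L S hLS ih =>
    rw [coe_insert, Set.pairwiseDisjoint_insert] at hS
    have hdisj : Disjoint L (S.biUnion id) := (disjoint_biUnion_right _ _ _).mpr fun M hM =>
      hS.2 M hM fun h => hLS (h ▸ hM)
    simp only [biUnion_insert, id, prod_insert hLS]
    exact (hν L (mem_insert_self L S)).mul (ih hS.1 fun M hM => hν M (mem_insert_of_mem hM)) hdisj

lemma marginal_mul_of_isProbOn_compl {J : Finset I} {f g : (∀ i, A i) → ℝ}
    (hf : ∀ x y : ∀ i, A i, (∀ i ∈ J, x i = y i) → f x = f y) (hg : IsProbOn Jᶜ g)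
    (x : ∀ i, A i) : marginal (fun y => f y * g y) J x = f x := by
  rw [marginal_eq_sum_agreeingOff]
  calc ∑ y ∈ agreeingOff Jᶜ x, f y * g y = ∑ y ∈ agreeingOff Jᶜ x, f x * g y := by
        refine sum_congr rfl fun y hy => ?_
        rw [mem_agreeingOff] at hy
        rw [hf y x fun i hi => hy i (by simpa using hi)]
    _ = f x := by rw [← mul_sum, hg.sum_agreeingOff, mul_one]

lemma marginal_prod_of_subset_or_disjoint {𝒟 : Finset (Finset I)}
    (hdisj : (𝒟 : Set (Finset I)).PairwiseDisjoint id) (hcov : 𝒟.biUnion id = univ)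
    {ν : Finset I → (∀ i, A i) → ℝ} (hν : ∀ L ∈ 𝒟, IsProbOn L (ν L)) {J : Finset I}
    (hJ : ∀ L ∈ 𝒟, L ⊆ J ∨ Disjoint L J) (x : ∀ i, A i) :
    marginal (fun y => ∏ L ∈ 𝒟, ν L y) J x = ∏ L ∈ 𝒟 with L ⊆ J, ν L x := by
  have hcompl : (𝒟.filter fun L => ¬L ⊆ J).biUnion id = Jᶜ := by
    ext i
    simp only [mem_biUnion, mem_filter, id, mem_compl]
    constructor
    · rintro ⟨L, ⟨hL, hLJ⟩, hiL⟩
      exact disjoint_left.mp ((hJ L hL).resolve_left hLJ) hiL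
    · intro hiJ
      obtain ⟨L, hL, hiL⟩ := mem_biUnion.mp (hcov ▸ mem_univ i)
      exact ⟨L, ⟨hL, fun hLJ => hiJ (hLJ hiL)⟩, hiL⟩
  have hrest : IsProbOn Jᶜ fun y => ∏ L ∈ 𝒟 with ¬L ⊆ J, ν L y := by
    rw [← hcompl]
    exact IsProbOn.prod (hdisj.subset (coe_subset.mpr (filter_subset _ _)))
      fun L hL => hν L (mem_filter.mp hL).1
  simp only [← prod_filter_mul_prod_filter_not 𝒟 fun L => L ⊆ J]
  refine marginal_mul_of_isProbOn_compl (fun y z hyz => prod_congr rfl fun L hL => ?_) hrest x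
  obtain ⟨hL, hLJ⟩ := mem_filter.mp hL
  exact (hν L hL).1 y z fun i hi => hyz i (hLJ hi)

lemma IsPartitionF.pairwiseDisjoint {𝒟 : Finset (Finset I)} (h : IsPartitionF 𝒟) :
    (𝒟 : Set (Finset I)).PairwiseDisjoint id := fun L hL L' hL' hne =>
  disjoint_iff_inter_eq_empty.mpr (h.2.1 L hL L' hL' hne)

lemma marginal_mul_marginal_compl_of_subset_or_disjoint {𝒟 : Finset (Finset I)}
    (hpart : IsPartitionF 𝒟) {ν : Finset I → (∀ i, A i) → ℝ} (hν : ∀ L ∈ 𝒟, IsProbOn L (ν L))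
    {J : Finset I} (hJ : ∀ L ∈ 𝒟, L ⊆ J ∨ Disjoint L J) (x : ∀ i, A i) :
    marginal (fun y => ∏ L ∈ 𝒟, ν L y) J x * marginal (fun y => ∏ L ∈ 𝒟, ν L y) Jᶜ x =
      ∏ L ∈ 𝒟, ν L x := by
  have hJc : ∀ L ∈ 𝒟, L ⊆ Jᶜ ↔ ¬L ⊆ J := fun L hL => by
    rw [subset_compl_iff_disjoint_right]
    exact ⟨fun hdisj hsub => (hpart.1 L hL).ne_empty ((disjoint_self_iff_empty L).mp
      (disjoint_of_subset_right hsub hdisj)), (hJ L hL).resolve_left⟩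
  have hJc' : ∀ L ∈ 𝒟, L ⊆ Jᶜ ∨ Disjoint L Jᶜ := fun L hL => by
    rw [hJc L hL, disjoint_compl_right_iff]
    exact (em (L ⊆ J)).symm
  rw [marginal_prod_of_subset_or_disjoint hpart.pairwiseDisjoint hpart.2.2 hν hJ,
    marginal_prod_of_subset_or_disjoint hpart.pairwiseDisjoint hpart.2.2 hν hJc',
    filter_congr hJc, prod_filter_mul_prod_filter_not]

lemma subset_or_disjoint_of_isAtomD {ρ : Finset I → ℝ} {L L' J : Finset I}
    (hL' : isAtomD ρ L') (hLL' : L ⊆ L') (hJ : 0 < ρ J) : L ⊆ J ∨ Disjoint L J := by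
  rcases hL'.2 J hJ with h | h
  · exact .inl (hLL'.trans (inter_eq_right.mp h))
  · rw [inter_comm, ← disjoint_iff_inter_eq_empty] at h
    exact .inr (disjoint_of_subset_left hLL' h)

end Fixpoint

/-- a product measure over a partition finer than `𝒟^ρ` is a fixed point
of the recombination operator. -/
theorem Xi_fixed_point_of_finer_product {I : Type u} [Fintype I] [DecidableEq I]
    {A : I → Type*} [∀ i, Fintype (A i)] [∀ i, DecidableEq (A i)]
    (ρ : Finset I → ℝ) (hρ : IsProbVec ρ)
    (𝒟 : Finset (Finset I)) (hpart : IsPartitionF 𝒟)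
    (hfine : ∀ L ∈ 𝒟, ∃ L' : Finset I, isAtomD ρ L' ∧ L ⊆ L')
    (ν : Finset I → (∀ i, A i) → ℝ) (hν : ∀ L ∈ 𝒟, IsProbOn L (ν L)) :
    Xi ρ (fun x => ∏ L ∈ 𝒟, ν L x) = fun x => ∏ L ∈ 𝒟, ν L x := by
  funext x
  have hterm : ∀ J, ρ J * (marginal (fun y => ∏ L ∈ 𝒟, ν L y) J x *
      marginal (fun y => ∏ L ∈ 𝒟, ν L y) Jᶜ x) = ρ J * ∏ L ∈ 𝒟, ν L x := by
    intro J
    rcases (hρ.2.1 J).eq_or_lt with hzero | hpos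
    · rw [← hzero, zero_mul, zero_mul]
    refine congrArg _
      (marginal_mul_marginal_compl_of_subset_or_disjoint hpart hν (fun L hL => ?_) x)
    obtain ⟨L', hL', hLL'⟩ := hfine L hL
    exact subset_or_disjoint_of_isAtomD hL' hLL' hpos
  simp only [Xi, hterm, ← sum_mul, hρ.2.2, one_mul]
end

section
/- For K ∈ 𝒴(𝒥_ρ) and a nonempty M ∈ K ∩ 𝒥_ρ with M ≠ K, the strict inequality ρ^K_K < ρ^M_M holds. -/
open scoped Classical
open Finset

universe u

lemma Finset.inter_eq_right_or_eq_empty_of_subset {α : Type*} [DecidableEq α]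
    {J K M : Finset α} (hMK : M ⊆ K) (h : J ∩ K = K ∨ J ∩ K = ∅) : J ∩ M = M ∨ J ∩ M = ∅ := by
  rcases h with h | h
  · exact .inl (inter_eq_right.2 (hMK.trans (inter_eq_right.1 h)))
  · exact .inr (subset_empty.1 (h ▸ inter_subset_inter_left hMK))

section Nonsplitting
variable {I : Type u} [Fintype I] [DecidableEq I]

noncomputable def nonsplitting (ρ : Finset I → ℝ) (K : Finset I) : Finset (Finset I) :=
  univ.filter (fun J : Finset I => 0 < ρ J ∧ (J ∩ K = K ∨ J ∩ K = ∅))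

lemma rhoC_self (ρ : Finset I → ℝ) (K : Finset I) :
    rhoC ρ K K = ∑ J ∈ nonsplitting ρ K, ρ J := by
  rw [rhoC, if_pos rfl, nonsplitting]

lemma nonsplitting_mono (ρ : Finset I → ℝ) {K M : Finset I} (hMK : M ⊆ K) :
    nonsplitting ρ K ⊆ nonsplitting ρ M := by
  intro J hJ
  simp only [nonsplitting, mem_filter, mem_univ, true_and] at hJ ⊢
  exact ⟨hJ.1, inter_eq_right_or_eq_empty_of_subset hMK hJ.2⟩

end Nonsplitting

theorem rhoC_strict_mono_general {I : Type u} [Fintype I] [DecidableEq I]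
    (ρ : Finset I → ℝ) (hρ : IsProbVec ρ) (K M J : Finset I)
    (hJ : 0 < ρ J) (hJK : J ∩ K = M) (hMne : M.Nonempty) (hMK : M ≠ K) :
    rhoC ρ K K < rhoC ρ M M := by
  have hMsubK : M ⊆ K := hJK ▸ inter_subset_right
  have hJ_mem : J ∈ nonsplitting ρ M := by
    simp only [nonsplitting, mem_filter, mem_univ, true_and]
    exact ⟨hJ, .inl (inter_eq_right.2 (hJK ▸ inter_subset_left))⟩
  have hJ_not_mem : J ∉ nonsplitting ρ K := by
    simp only [nonsplitting, mem_filter, mem_univ, true_and, hJK, not_and]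
    exact fun _ => not_or.2 ⟨hMK, hMne.ne_empty⟩
  rw [rhoC_self, rhoC_self]
  exact sum_lt_sum_of_subset (nonsplitting_mono ρ hMsubK) hJ_mem hJ_not_mem hJ
    fun j _ _ => hρ.2.1 j

/-- for `K ∈ 𝒴(𝒥_ρ)` and nonempty `M = J ∩ K ∈ K ∩ 𝒥_ρ` with `M ≠ K`,
one has the strict inequality `ρ^K_K < ρ^M_M`. -/
theorem rhoC_strict_mono {I : Type u} [Fintype I] [DecidableEq I]
    (ρ : Finset I → ℝ) (hρ : IsProbVec ρ) (K M J : Finset I) (hK : inY ρ K)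
    (hJ : 0 < ρ J) (hJK : J ∩ K = M) (hMne : M.Nonempty) (hMK : M ≠ K) :
    rhoC ρ K K < rhoC ρ M M :=
  rhoC_strict_mono_general ρ hρ K M J hJ hJK hMne hMK
end

section
/- Assume ρ_J = ρ_{J^c} for all J in the support with J ≠ I. Then for every K ∈ 𝒴(𝒥_ρ) and every nonempty M ∈ K ∩ 𝒥_ρ with M ≠ K, one has ρ^K_M = ρ^K_{K∖M}. -/
open scoped Classical
open Finset

universe u

/-! Complementation `J ↦ Jᶜ` is a weight-preserving bijection from `{J ∈ 𝒥_ρ | J ∩ K = M}` onto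
`{J ∈ 𝒥_ρ | J ∩ K = K \ M}`: the symmetry `ρ_J = ρ_{Jᶜ}` applies because neither index set
contains `univ`, as neither `M` nor `K \ M` equals `K`. -/

section ComplementSymmetric

variable {I : Type u} [Fintype I] [DecidableEq I]

theorem compl_inter_eq_sdiff_of_inter_eq {J K M : Finset I} (h : J ∩ K = M) :
    Jᶜ ∩ K = K \ M := by
  rw [← h, inter_comm, ← sdiff_eq_inter_compl, sdiff_inter_self_right]

theorem rhoC_of_ne (ρ : Finset I → ℝ) {K M : Finset I} (h : M ≠ K) :
    rhoC ρ K M = ∑ J ∈ univ.filter (fun J : Finset I => 0 < ρ J ∧ J ∩ K = M), ρ J :=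
  if_neg h

theorem ne_univ_of_inter_ne {J K : Finset I} (h : J ∩ K ≠ K) : J ≠ univ := by
  rintro rfl
  exact h (univ_inter K)

theorem pos_compl_and_compl_inter_eq_sdiff {ρ : Finset I → ℝ}
    (hsym : ∀ J : Finset I, 0 < ρ J → J ≠ Finset.univ → ρ J = ρ Jᶜ)
    {J K M : Finset I} (hMK : M ≠ K) (hJ : 0 < ρ J ∧ J ∩ K = M) :
    0 < ρ Jᶜ ∧ Jᶜ ∩ K = K \ M := by
  obtain ⟨hpos, hJK⟩ := hJ
  have hne : J ≠ univ := ne_univ_of_inter_ne (hJK ▸ hMK)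
  exact ⟨hsym J hpos hne ▸ hpos, compl_inter_eq_sdiff_of_inter_eq hJK⟩

theorem sum_inter_eq_eq_sum_inter_eq_sdiff {ρ : Finset I → ℝ}
    (hsym : ∀ J : Finset I, 0 < ρ J → J ≠ Finset.univ → ρ J = ρ Jᶜ)
    {K M : Finset I} (hMsub : M ⊆ K) (hMK : M ≠ K) (hKM : K \ M ≠ K) :
    ∑ J ∈ univ.filter (fun J : Finset I => 0 < ρ J ∧ J ∩ K = M), ρ J =
      ∑ J ∈ univ.filter (fun J : Finset I => 0 < ρ J ∧ J ∩ K = K \ M), ρ J := by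
  apply sum_nbij' compl compl
  · intro J hJ
    simp only [mem_filter, mem_univ, true_and] at hJ ⊢
    exact pos_compl_and_compl_inter_eq_sdiff hsym hMK hJ
  · intro J hJ
    simp only [mem_filter, mem_univ, true_and] at hJ ⊢
    simpa only [Finset.sdiff_sdiff_eq_self hMsub] using
      pos_compl_and_compl_inter_eq_sdiff hsym hKM hJ
  · exact fun J _ => compl_compl J
  · exact fun J _ => compl_compl J
  · intro J hJ
    obtain ⟨hpos, hJK⟩ := (mem_filter.mp hJ).2
    exact hsym J hpos (ne_univ_of_inter_ne (hJK ▸ hMK))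

end ComplementSymmetric

theorem rhoC_complement_symm_general {I : Type u} [Fintype I] [DecidableEq I]
    (ρ : Finset I → ℝ)
    (hsym : ∀ J : Finset I, 0 < ρ J → J ≠ Finset.univ → ρ J = ρ Jᶜ)
    (K M J : Finset I)
    (hJK : J ∩ K = M) (hMne : M.Nonempty) (hMK : M ≠ K) :
    rhoC ρ K M = rhoC ρ K (K \ M) := by
  have hMsub : M ⊆ K := hJK ▸ inter_subset_right
  have hKM : K \ M ≠ K := (sdiff_ssubset hMsub hMne).ne
  rw [rhoC_of_ne ρ hMK, rhoC_of_ne ρ hKM]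
  exact sum_inter_eq_eq_sum_inter_eq_sdiff hsym hMsub hMK hKM

/-- if `ρ_J = ρ_{Jᶜ}` on the support (away from `I`), then
`ρ^K_M = ρ^K_{K∖M}` for nonempty `M = J ∩ K ≠ K`. -/
theorem rhoC_complement_symm {I : Type u} [Fintype I] [DecidableEq I]
    (ρ : Finset I → ℝ) (hρ : IsProbVec ρ)
    (hsym : ∀ J : Finset I, 0 < ρ J → J ≠ Finset.univ → ρ J = ρ Jᶜ)
    (K M J : Finset I) (hK : inY ρ K)
    (hJ : 0 < ρ J) (hJK : J ∩ K = M) (hMne : M.Nonempty) (hMK : M ≠ K) :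
    rhoC ρ K M = rhoC ρ K (K \ M) :=
  rhoC_complement_symm_general ρ hsym K M J hJK hMne hMK
end

section
/- For K ∈ 𝒴(𝒥_ρ), the marginal of Ξ[μ] on K satisfies Ξ[μ]_K = ρ^K_K μ_K + ∑_{M ∈ (K∩𝒥_ρ), ∅≠M≠K} ρ^K_M · (μ_M ⊗ μ_{K∖M}). -/
open scoped Classical
open Finset

universe u

/-!
Marginalising `μ_J ⊗ μ_{Jᶜ}` to `K` gives `μ_{J ∩ K} ⊗ μ_{K \ J}`: a configuration is
determined by its restrictions to `J` and `Jᶜ` (`Finset.piecewise`), so the summation over the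
full configuration collapses. Summing over `J` with weights `ρ_J` and grouping the `J` by
`M = J ∩ K` yields the coefficients `ρ^K_M`; the classes `M = K` and `M = ∅` merge into `ρ^K_K`
because `μ_∅ = 1`.
-/
lemma piecewise_eq_iff {ι : Type*} {α : ι → Type*} [Fintype ι] [DecidableEq ι]
    (J : Finset ι) (z w y : ∀ i, α i) :
    J.piecewise z w = y ↔ (∀ i ∈ J, z i = y i) ∧ ∀ i ∈ Jᶜ, w i = y i := by
  simp only [funext_iff, Finset.mem_compl]
  constructor
  · rintro h
    exact ⟨fun i hi => by simpa [hi] using h i, fun i hi => by simpa [hi] using h i⟩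
  · rintro ⟨hz, hw⟩ i
    by_cases hi : i ∈ J
    · simpa [hi] using hz i hi
    · simpa [hi] using hw i hi

lemma forall_piecewise_eq_iff {ι : Type*} {α : ι → Type*} [DecidableEq ι]
    (J K : Finset ι) (z w x : ∀ i, α i) :
    (∀ i ∈ K, J.piecewise z w i = x i) ↔
      (∀ i ∈ J ∩ K, z i = x i) ∧ ∀ i ∈ K \ J, w i = x i := by
  simp only [Finset.mem_inter, Finset.mem_sdiff]
  constructor
  · intro h
    exact ⟨fun i hi => by simpa [hi.1] using h i hi.2,
      fun i hi => by simpa [hi.2] using h i hi.1⟩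
  · rintro ⟨hz, hw⟩ i hi
    by_cases hiJ : i ∈ J
    · simpa [hiJ] using hz i ⟨hiJ, hi⟩
    · simpa [hiJ] using hw i ⟨hi, hiJ⟩

section Marginal
variable {I : Type u} [Fintype I] [DecidableEq I]
variable {A : I → Type*} [∀ i, Fintype (A i)] [∀ i, DecidableEq (A i)]

lemma marginal_empty (μ : (∀ i, A i) → ℝ) (x : ∀ i, A i) :
    marginal μ (∅ : Finset I) x = ∑ y, μ y := by
  simp [marginal]

lemma marginal_sum_mul (c : Finset I → ℝ) (f : Finset I → (∀ i, A i) → ℝ) (K : Finset I)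
    (x : ∀ i, A i) :
    marginal (fun y => ∑ J, c J * f J y) K x = ∑ J, c J * marginal (f J) K x := by
  simp only [marginal, Finset.mul_sum, mul_ite, mul_zero]
  rw [Finset.sum_comm]
  refine Finset.sum_congr rfl fun y _ => ?_
  split_ifs <;> simp

lemma marginal_marginal_mul_marginal_compl (μ ν : (∀ i, A i) → ℝ) (J K : Finset I)
    (x : ∀ i, A i) :
    marginal (fun y => marginal μ J y * marginal ν Jᶜ y) K x =
      marginal μ (J ∩ K) x * marginal ν (K \ J) x := by
  have hy (z w : ∀ i, A i) :
      ∑ y : ∀ i, A i, (if (∀ i ∈ K, y i = x i) ∧ (∀ i ∈ J, z i = y i) ∧ ∀ i ∈ Jᶜ, w i = y i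
        then μ z * ν w else 0) =
      if (∀ i ∈ J ∩ K, z i = x i) ∧ ∀ i ∈ K \ J, w i = x i then μ z * ν w else 0 := by
    simp_rw [← piecewise_eq_iff, and_comm (a := ∀ i ∈ K, _), ite_and]
    simp only [Finset.sum_ite_eq, Finset.mem_univ, if_true, forall_piecewise_eq_iff, ite_and]
  simp only [marginal, Finset.sum_mul_sum, ite_zero_mul_ite_zero, ← hy]
  rw [eq_comm, Finset.sum_congr rfl fun z _ => Finset.sum_comm, Finset.sum_comm]
  refine Finset.sum_congr rfl fun y _ => ?_
  by_cases h : ∀ i ∈ K, y i = x i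
  · simp only [eq_true h, true_and, if_true]
  · simp only [eq_false h, false_and, if_false, Finset.sum_const_zero]

end Marginal

lemma sum_mul_inter_eq_rhoC {I : Type u} [Fintype I] [DecidableEq I] (ρ : Finset I → ℝ) (hρ : ∀ J, 0 ≤ ρ J) (K : Finset I)
    (g : Finset I → ℝ) (c : ℝ) (hgK : g K = c) (hg_empty : g ∅ = c) :
    ∑ J, ρ J * g (J ∩ K) = rhoC ρ K K * c +
      ∑ M ∈ univ.filter (fun M : Finset I => M.Nonempty ∧ M ≠ K ∧ ∃ J, 0 < ρ J ∧ J ∩ K = M),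
        rhoC ρ K M * g M := by
  have hsupp : ∑ J, ρ J * g (J ∩ K) = ∑ J ∈ univ.filter (0 < ρ ·), ρ J * g (J ∩ K) :=
    (Finset.sum_filter_of_ne fun J _ hJ =>
      (hρ J).lt_of_ne' fun h => hJ (by rw [h, zero_mul])).symm
  rw [hsupp, ← Finset.sum_filter_add_sum_filter_not _ (fun J => J ∩ K = K ∨ J ∩ K = ∅)]
  congr 1
  · rw [rhoC, if_pos rfl, Finset.sum_mul, Finset.filter_filter]
    refine Finset.sum_congr rfl fun J hJ => ?_
    rcases (Finset.mem_filter.1 hJ).2.2 with h | h <;> simp only [h, hgK, hg_empty]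
  · refine (Finset.sum_fiberwise_of_maps_to (g := (· ∩ K)) ?_ _).symm.trans
      (Finset.sum_congr rfl fun M hM => ?_)
    · intro J hJ
      simp only [Finset.mem_filter, Finset.mem_univ, true_and, not_or] at hJ ⊢
      exact ⟨Finset.nonempty_iff_ne_empty.2 hJ.2.2, hJ.2.1, J, hJ.1, rfl⟩
    obtain ⟨hMne, hMK, -⟩ := (Finset.mem_filter.1 hM).2
    rw [rhoC, if_neg hMK, Finset.sum_mul]
    refine Finset.sum_congr ?_ fun J hJ => ?_
    · ext J
      simp only [Finset.mem_filter, Finset.mem_univ, true_and]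
      constructor
      · rintro ⟨⟨hJ, -⟩, hJK⟩
        exact ⟨hJ, hJK⟩
      · rintro ⟨hJ, rfl⟩
        exact ⟨⟨hJ, not_or.2 ⟨hMK, hMne.ne_empty⟩⟩, rfl⟩
    · rw [(Finset.mem_filter.1 hJ).2.2]

theorem marginal_Xi_general {I : Type u} [Fintype I] [DecidableEq I]
    {A : I → Type*} [∀ i, Fintype (A i)] [∀ i, DecidableEq (A i)]
    (ρ : Finset I → ℝ) (hρ : IsProbVec ρ)
    (μ : (∀ i, A i) → ℝ) (hμ : IsProbMeasure μ)
    (K : Finset I) :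
    marginal (Xi ρ μ) K = fun x =>
      rhoC ρ K K * marginal μ K x +
        ∑ M ∈ univ.filter
            (fun M : Finset I => M.Nonempty ∧ M ≠ K ∧ ∃ J, 0 < ρ J ∧ J ∩ K = M),
          rhoC ρ K M * (marginal μ M x * marginal μ (K \ M) x) := by
  funext x
  unfold Xi
  rw [marginal_sum_mul]
  refine (Finset.sum_congr rfl fun J _ => ?_).trans
    (sum_mul_inter_eq_rhoC ρ hρ.2.1 K (fun M => marginal μ M x * marginal μ (K \ M) x) _ ?_ ?_)
  · rw [marginal_marginal_mul_marginal_compl, Finset.sdiff_inter_self_right]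
  · rw [Finset.sdiff_self, marginal_empty, hμ.2, mul_one]
  · rw [Finset.sdiff_empty, marginal_empty, hμ.2, one_mul]

/-- the marginal of `Ξ[μ]` on `K ∈ 𝒴(𝒥_ρ)`:
`Ξ[μ]_K = ρ^K_K μ_K + ∑_{∅ ≠ M ≠ K, M ∈ K∩𝒥_ρ} ρ^K_M (μ_M ⊗ μ_{K∖M})`. -/
theorem marginal_Xi {I : Type u} [Fintype I] [DecidableEq I]
    {A : I → Type*} [∀ i, Fintype (A i)] [∀ i, DecidableEq (A i)]
    (ρ : Finset I → ℝ) (hρ : IsProbVec ρ)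
    (μ : (∀ i, A i) → ℝ) (hμ : IsProbMeasure μ)
    (K : Finset I) (hK : inY ρ K) :
    marginal (Xi ρ μ) K = fun x =>
      rhoC ρ K K * marginal μ K x +
        ∑ M ∈ univ.filter
            (fun M : Finset I => M.Nonempty ∧ M ≠ K ∧ ∃ J, 0 < ρ J ∧ J ∩ K = M),
          rhoC ρ K M * (marginal μ M x * marginal μ (K \ M) x) :=
  marginal_Xi_general ρ hρ μ hμ K
end

section
/- The matrix P on the set ∂(𝒯) of leaf-partitions, defined by P_{δ,δ'} = ∏_{ℓ∈δ∩δ'} ρ^ℓ_ℓ · ∏_{ℓ∈δ∖δ'} (ρ^ℓ_{ℓ_1} + ρ^ℓ_{ℓ_2}) when δ → δ' (where {ℓ_1, ℓ_2} is the dyadic split of ℓ in δ'), and P_{δ,δ'} = 0 otherwise, is row-stochastic: ∑_{δ'} P_{δ,δ'} = 1 for every δ. -/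
open scoped Classical
open Finset

universe u

section Trees
variable {I : Type u} [Fintype I] [DecidableEq I]

/-- The leaf of a branch of length `n`. -/
def leafOf {n : ℕ} (b : Fin (n + 1) → Finset I) : Finset I := b (Fin.last n)

end Trees

/-- The family `𝒯_n` of rooted dyadic trees of depth `n`, a tree being identified with its
(finite) set of branches; each branch is a tuple `(b_0, …, b_n)` of subsets of `I` with
`b_0 = I`.  In one step, every branch is extended either by repeating its leaf (not allowed
when `n = 0` and `ρ_I = 0`), or, when its leaf is not an atom of `𝒟^ρ`, by splitting the
leaf into the two nonempty parts `{ℓ∩J, ℓ∖J}` determined by some `J` in the support of `ρ`. -/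
inductive IsTree {I : Type u} [Fintype I] [DecidableEq I] (ρ : Finset I → ℝ) :
    (n : ℕ) → Finset (Fin (n + 1) → Finset I) → Prop
  | zero : IsTree ρ 0 {fun _ => Finset.univ}
  | succ {n : ℕ} {T : Finset (Fin (n + 1) → Finset I)}
      (ext : (Fin (n + 1) → Finset I) → Finset (Fin (n + 2) → Finset I))
      (hT : IsTree ρ n T)
      (hext : ∀ b ∈ T,
        (¬ (n = 0 ∧ ρ Finset.univ = 0) ∧ ext b = {Fin.snoc b (leafOf b)}) ∨
        (¬ isAtomD ρ (leafOf b) ∧ ∃ J : Finset I, 0 < ρ J ∧ J ≠ Finset.univ ∧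
          (leafOf b ∩ J).Nonempty ∧ (leafOf b \ J).Nonempty ∧
          ext b = {Fin.snoc b (leafOf b ∩ J), Fin.snoc b (leafOf b \ J)})) :
      IsTree ρ (n + 1) (T.biUnion ext)

section Trees2
variable {I : Type u} [Fintype I] [DecidableEq I]

/-- The weight `∏_{r=1}^{n} ρ^{b_{r-1}}_{b_r}` of a branch. -/
noncomputable def branchWeight (ρ : Finset I → ℝ) {n : ℕ} (b : Fin (n + 1) → Finset I) : ℝ :=
  ∏ r : Fin n, rhoC ρ (b r.castSucc) (b r.succ)

/-- The coefficient `q^n_δ`: total weight of the trees of depth `n` with leaf set `δ`. -/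
noncomputable def qcoef (ρ : Finset I → ℝ) (n : ℕ) (δ : Finset (Finset I)) : ℝ :=
  ∑ T : Finset (Fin (n + 1) → Finset I),
    if IsTree ρ n T ∧ T.image leafOf = δ then ∑ b ∈ T, branchWeight ρ b else 0

/-- `δ ∈ ∂(𝒯_n)`: `δ` is the leaf partition of some tree of depth `n`. -/
def LeafPart (ρ : Finset I → ℝ) (n : ℕ) (δ : Finset (Finset I)) : Prop :=
  ∃ T : Finset (Fin (n + 1) → Finset I), IsTree ρ n T ∧ T.image leafOf = δ

/-- `δ ∈ ∂(𝒯)`: `δ` is the leaf partition of some tree. -/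
def LeafPartAny (ρ : Finset I → ℝ) (δ : Finset (Finset I)) : Prop := ∃ n, LeafPart ρ n δ

/-- The relation `δ → δ'`: every atom of `δ` is either kept or split into two nonempty
parts by a set in the support of `ρ`. -/
def stepRel (ρ : Finset I → ℝ) (δ δ' : Finset (Finset I)) : Prop :=
  ∃ c : Finset I → Finset (Finset I),
    (∀ ℓ ∈ δ, c ℓ = {ℓ} ∨ ∃ J : Finset I, 0 < ρ J ∧ J ≠ Finset.univ ∧
      (ℓ ∩ J).Nonempty ∧ (ℓ \ J).Nonempty ∧ c ℓ = {ℓ ∩ J, ℓ \ J}) ∧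
    δ' = δ.biUnion c

/-- The transition matrix `P` of equation (23):
`P_{δ,δ'} = ∏_{ℓ∈δ∩δ'} ρ^ℓ_ℓ ⬝ ∏_{ℓ∈δ∖δ'} (ρ^ℓ_{ℓ_1} + ρ^ℓ_{ℓ_2})` when `δ → δ'`, else `0`;
here `ℓ_1, ℓ_2` are the parts of `ℓ` in `δ'`. -/
noncomputable def Pmat (ρ : Finset I → ℝ) (δ δ' : Finset (Finset I)) : ℝ :=
  if stepRel ρ δ δ' then
    (∏ ℓ ∈ δ ∩ δ', rhoC ρ ℓ ℓ) *
      ∏ ℓ ∈ δ \ δ', ∑ m ∈ δ'.filter (fun m => m ⊆ ℓ ∧ m.Nonempty), rhoC ρ ℓ m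
  else 0

/-- The distribution at time `n` of the Markov chain with transition matrix `P`
and initial distribution `ν`. -/
noncomputable def chainDist (ρ : Finset I → ℝ) (ν : Finset (Finset I) → ℝ) :
    ℕ → Finset (Finset I) → ℝ
  | 0 => ν
  | n + 1 => fun δ' => ∑ δ : Finset (Finset I), chainDist ρ ν n δ * Pmat ρ δ δ'

/-- The Dirac initial distribution at a state `δ0`. -/
noncomputable def diracAt (δ0 : Finset (Finset I)) : Finset (Finset I) → ℝ :=
  fun δ => if δ = δ0 then 1 else 0

/-- The partition `𝒟^ρ` (the set of atoms generated by the support of `ρ`). -/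
noncomputable def DrhoP (ρ : Finset I → ℝ) : Finset (Finset I) :=
  univ.filter (fun L => isAtomD ρ L)

/-- The partition `𝒟^{ρ,K}`: the atoms of `𝒟^ρ` disjoint from `K`, together with `K`. -/
noncomputable def DrhoK (ρ : Finset I → ℝ) (K : Finset I) : Finset (Finset I) :=
  univ.filter (fun L => isAtomD ρ L ∧ L ∩ K = ∅) ∪ {K}

/-- `∂(𝒯)^ℰ = {𝒟^{ρ,K} : K ∈ 𝒴(𝒥_ρ), ρ^K_K = η}`. -/
noncomputable def Efin (ρ : Finset I → ℝ) (η : ℝ) : Finset (Finset (Finset I)) :=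
  univ.filter (fun δ : Finset (Finset I) =>
    ∃ K : Finset I, inY ρ K ∧ rhoC ρ K K = η ∧ δ = DrhoK ρ K)

/-- The distribution at time `n` of the chain started at `δ0` and killed upon entering
`∂(𝒯)^ℰ`; for `γ ∈ ∂(𝒯)^ℰ`, `killedDist ρ η δ0 n γ = P_{δ0}(ζ^ℰ = n, Y_n = γ)`. -/
noncomputable def killedDist (ρ : Finset I → ℝ) (η : ℝ) (δ0 : Finset (Finset I)) :
    ℕ → Finset (Finset I) → ℝ
  | 0 => fun δ => if δ = δ0 then 1 else 0
  | n + 1 => fun δ' =>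
      ∑ δ ∈ univ.filter (fun δ : Finset (Finset I) => δ ∉ Efin ρ η),
        killedDist ρ η δ0 n δ * Pmat ρ δ δ'

/-- `φ_{δ0} = E_{δ0}(η^{-ζ^ℰ}, ζ^ℰ < ∞) = ∑_{j≥0} η^{-j} P_{δ0}(ζ^ℰ = j)`. -/
noncomputable def phiVec (ρ : Finset I → ℝ) (η : ℝ) (δ0 : Finset (Finset I)) : ℝ :=
  ∑' j : ℕ, (η ^ j)⁻¹ * ∑ γ ∈ Efin ρ η, killedDist ρ η δ0 j γ

end Trees2

/-!
The atoms of a leaf partition are nonempty and pairwise disjoint, so a successor `δ'` of `δ` is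
determined by the child set it assigns to each atom `ℓ` (`{ℓ}` or a split `{ℓ ∩ J, ℓ \ J}`), and
`P_{δ,δ'}` factorises as `∏_{ℓ ∈ δ} ∑_{m child of ℓ} ρ^ℓ_m`. Summing over `δ'` therefore gives
`∏_{ℓ ∈ δ} ∑_s ∑_{m ∈ s} ρ^ℓ_m`, `s` ranging over the child sets of `ℓ`. Distinct child sets are
disjoint, and grouping the `J ∈ 𝒥_ρ` by their trace `J ∩ ℓ` (the traces `∅` and `ℓ` both counting
as `ℓ`) shows that each factor is `∑_J ρ_J = 1`.
-/

theorem Set.PairwiseDisjoint.image_id {ι α : Type*} [PartialOrder α] [OrderBot α]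
    {s : Set ι} {f : ι → α} (h : s.PairwiseDisjoint f) : (f '' s).PairwiseDisjoint id := by
  rintro _ ⟨i, hi, rfl⟩ _ ⟨j, hj, rfl⟩ hne
  exact h hi hj fun hij => hne (hij ▸ rfl)

section RowStochastic
variable {I : Type u} [Fintype I] [DecidableEq I] {ρ : Finset I → ℝ}

/-- The sets of atoms that an atom `ℓ` may turn into in one step `δ → δ'`. -/
def IsChildSet (ρ : Finset I → ℝ) (ℓ : Finset I) (s : Finset (Finset I)) : Prop :=
  s = {ℓ} ∨ ∃ J : Finset I, 0 < ρ J ∧ J ≠ Finset.univ ∧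
    (ℓ ∩ J).Nonempty ∧ (ℓ \ J).Nonempty ∧ s = {ℓ ∩ J, ℓ \ J}

noncomputable def childSets (ρ : Finset I → ℝ) (ℓ : Finset I) : Finset (Finset (Finset I)) :=
  univ.filter (IsChildSet ρ ℓ)

def childrenIn (δ' : Finset (Finset I)) (ℓ : Finset I) : Finset (Finset I) :=
  δ'.filter (fun m => m ⊆ ℓ ∧ m.Nonempty)

theorem mem_childSets {ℓ : Finset I} {s : Finset (Finset I)} :
    s ∈ childSets ρ ℓ ↔ IsChildSet ρ ℓ s := by
  simp [childSets]

namespace IsChildSet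

variable {ℓ m : Finset I} {s : Finset (Finset I)}

theorem eq_or_subset_nonempty (hs : IsChildSet ρ ℓ s) (hm : m ∈ s) :
    m = ℓ ∨ m ⊆ ℓ ∧ m.Nonempty := by
  rcases hs with rfl | ⟨J, -, -, hJ, hJc, rfl⟩
  · exact .inl (mem_singleton.mp hm)
  · rcases mem_insert.mp hm with rfl | hm
    · exact .inr ⟨inter_subset_left, hJ⟩
    · rw [mem_singleton.mp hm]
      exact .inr ⟨sdiff_subset, hJc⟩

theorem eq_of_mem (hs : IsChildSet ρ ℓ s) (hm : m ∈ s) :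
    s = if m = ℓ then {ℓ} else {m, ℓ \ m} := by
  rcases hs with rfl | ⟨J, -, -, hJ, hJc, rfl⟩
  · rw [mem_singleton.mp hm, if_pos rfl]
  · rcases mem_insert.mp hm with rfl | hm
    · have hne : ℓ ∩ J ≠ ℓ := fun h => by
        obtain ⟨x, hx⟩ := hJc
        rw [mem_sdiff, ← h, mem_inter] at hx
        exact hx.2 hx.1.2
      rw [if_neg hne, sdiff_inter_self_left]
    · rw [mem_singleton.mp hm]
      have hne : ℓ \ J ≠ ℓ := fun h => by
        obtain ⟨x, hx⟩ := hJ
        rw [mem_inter, ← h, mem_sdiff] at hx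
        exact hx.1.2 hx.2
      rw [if_neg hne, sdiff_sdiff_self_left, pair_comm]

end IsChildSet

theorem isChildSet_pair {ℓ J : Finset I} (hJ : 0 < ρ J) (h₀ : J ∩ ℓ ≠ ∅) (hℓ : J ∩ ℓ ≠ ℓ) :
    IsChildSet ρ ℓ {ℓ ∩ J, ℓ \ J} := by
  refine .inr ⟨J, hJ, ?_, ?_, ?_, rfl⟩
  · rintro rfl
    exact hℓ (univ_inter ℓ)
  · rw [inter_comm]
    exact nonempty_iff_ne_empty.mpr h₀
  · exact sdiff_nonempty.mpr fun h => hℓ (inter_eq_right.mpr h)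

theorem pairwiseDisjoint_childSets (ℓ : Finset I) :
    (childSets ρ ℓ : Set (Finset (Finset I))).PairwiseDisjoint id := by
  intro s hs s' hs' hne
  rw [mem_coe, mem_childSets] at hs hs'
  exact disjoint_left.mpr fun m hm hm' =>
    hne ((hs.eq_of_mem hm).trans (hs'.eq_of_mem hm').symm)

theorem rhoC_eq_sum_filter_trace {ℓ m : Finset I} (hm : m = ℓ ∨ m.Nonempty) :
    rhoC ρ ℓ m = ∑ J ∈ (univ.filter fun J => 0 < ρ J).filter
      (fun J => (if J ∩ ℓ = ∅ then ℓ else J ∩ ℓ) = m), ρ J := by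
  rw [rhoC, filter_filter]
  split_ifs with hmℓ
  all_goals refine sum_congr (filter_congr fun J _ => and_congr_right fun _ => ?_) fun _ _ => rfl
  · subst hmℓ
    by_cases h₀ : J ∩ m = ∅ <;> simp [h₀]
  · have hm₀ : m ≠ ∅ := (hm.resolve_left hmℓ).ne_empty
    by_cases h₀ : J ∩ ℓ = ∅
    · simp [h₀, Ne.symm hm₀, Ne.symm hmℓ]
    · simp [h₀]

theorem sum_rhoC_biUnion_childSets (hρ : IsProbVec ρ) (ℓ : Finset I) :
    ∑ m ∈ (childSets ρ ℓ).biUnion id, rhoC ρ ℓ m = 1 := by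
  set trace : Finset I → Finset I := fun J => if J ∩ ℓ = ∅ then ℓ else J ∩ ℓ
  have htrace : ∀ J ∈ univ.filter fun J => 0 < ρ J, trace J ∈ (childSets ρ ℓ).biUnion id := by
    intro J hJ
    simp only [mem_biUnion, mem_childSets, id]
    by_cases htriv : J ∩ ℓ = ∅ ∨ J ∩ ℓ = ℓ
    · refine ⟨{ℓ}, .inl rfl, ?_⟩
      rcases htriv with h | h <;> simp [trace, h]
    · rw [not_or] at htriv
      refine ⟨_, isChildSet_pair (mem_filter.mp hJ).2 htriv.1 htriv.2, ?_⟩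
      simp only [trace, if_neg htriv.1, inter_comm J ℓ, mem_insert_self]
  calc ∑ m ∈ (childSets ρ ℓ).biUnion id, rhoC ρ ℓ m
      = ∑ m ∈ (childSets ρ ℓ).biUnion id,
          ∑ J ∈ (univ.filter fun J => 0 < ρ J) with trace J = m, ρ J := by
        refine sum_congr rfl fun m hm => rhoC_eq_sum_filter_trace ?_
        obtain ⟨s, hs, hms⟩ := mem_biUnion.mp hm
        exact ((mem_childSets.mp hs).eq_or_subset_nonempty hms).imp_right And.right
    _ = ∑ J ∈ univ.filter fun J => 0 < ρ J, ρ J := sum_fiberwise_of_maps_to htrace _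
    _ = 1 := by
        rw [sum_filter_of_ne fun J _ hJ => (hρ.2.1 J).lt_of_ne' hJ, hρ.2.2]

theorem sum_childSets_sum_rhoC (hρ : IsProbVec ρ) (ℓ : Finset I) :
    ∑ s ∈ childSets ρ ℓ, ∑ m ∈ s, rhoC ρ ℓ m = 1 :=
  (sum_biUnion (pairwiseDisjoint_childSets ℓ)).symm.trans (sum_rhoC_biUnion_childSets hρ ℓ)

variable {δ δ' : Finset (Finset I)}

theorem stepRel_iff_exists_isChildSet : stepRel ρ δ δ' ↔
    ∃ p : δ → Finset (Finset I), (∀ ℓ : δ, IsChildSet ρ ℓ (p ℓ)) ∧ δ' = univ.biUnion p := by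
  constructor
  · rintro ⟨c, hc, rfl⟩
    exact ⟨fun ℓ => c ℓ, fun ℓ => hc ℓ ℓ.2, by ext; simp⟩
  · rintro ⟨p, hp, rfl⟩
    refine ⟨fun ℓ => if h : ℓ ∈ δ then p ⟨ℓ, h⟩ else ∅, fun ℓ h => ?_, ?_⟩
    · simp only [dif_pos h]
      exact hp ⟨ℓ, h⟩
    · ext m
      simp only [mem_biUnion, mem_univ, true_and, Subtype.exists]
      exact exists_congr fun ℓ =>
        ⟨fun ⟨h, hm⟩ => ⟨h, by rwa [dif_pos h]⟩, fun ⟨h, hm⟩ => ⟨h, by rwa [dif_pos h] at hm⟩⟩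

theorem childrenIn_biUnion (hne : ∀ ℓ ∈ δ, ℓ.Nonempty)
    (hdisj : (δ : Set (Finset I)).PairwiseDisjoint id) {p : δ → Finset (Finset I)}
    (hp : ∀ ℓ : δ, IsChildSet ρ ℓ (p ℓ)) (ℓ : δ) :
    childrenIn (univ.biUnion p) ℓ = p ℓ := by
  ext m
  simp only [childrenIn, mem_filter, mem_biUnion, mem_univ, true_and]
  constructor
  · rintro ⟨⟨ℓ', hm⟩, hmℓ, hm₀⟩
    have hmℓ' : m ⊆ ℓ' := by
      rcases (hp ℓ').eq_or_subset_nonempty hm with rfl | h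
      exacts [subset_rfl, h.1]
    obtain rfl : ℓ' = ℓ := by
      by_contra h
      exact hm₀.ne_empty (disjoint_self.mp
        ((hdisj ℓ'.2 ℓ.2 (Subtype.coe_ne_coe.mpr h)).mono hmℓ' hmℓ))
    exact hm
  · intro hm
    refine ⟨⟨ℓ, hm⟩, ?_⟩
    rcases (hp ℓ).eq_or_subset_nonempty hm with rfl | h
    exacts [⟨subset_rfl, hne _ ℓ.2⟩, h]

theorem Pmat_of_stepRel (hne : ∀ ℓ ∈ δ, ℓ.Nonempty)
    (hdisj : (δ : Set (Finset I)).PairwiseDisjoint id) (h : stepRel ρ δ δ') :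
    Pmat ρ δ δ' = ∏ ℓ ∈ δ, ∑ m ∈ childrenIn δ' ℓ, rhoC ρ ℓ m := by
  rw [Pmat, if_pos h, ← prod_inter_mul_prod_sdiff δ δ']
  congr 1
  refine prod_congr rfl fun ℓ hℓ => ?_
  obtain ⟨hℓδ, hℓδ'⟩ := mem_inter.mp hℓ
  obtain ⟨p, hp, rfl⟩ := stepRel_iff_exists_isChildSet.mp h
  have hchildren := childrenIn_biUnion hne hdisj hp ⟨ℓ, hℓδ⟩
  have hℓp : ℓ ∈ p ⟨ℓ, hℓδ⟩ := by
    rw [← hchildren]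
    exact mem_filter.mpr ⟨hℓδ', subset_rfl, hne ℓ hℓδ⟩
  rw [hchildren, (hp _).eq_of_mem hℓp, if_pos rfl, sum_singleton]

theorem sum_stepRel_eq_sum_piFinset (hne : ∀ ℓ ∈ δ, ℓ.Nonempty)
    (hdisj : (δ : Set (Finset I)).PairwiseDisjoint id) (f : (δ → Finset (Finset I)) → ℝ) :
    ∑ δ' ∈ univ.filter (stepRel ρ δ), f (fun ℓ => childrenIn δ' ℓ) =
      ∑ p ∈ Fintype.piFinset fun ℓ : δ => childSets ρ ℓ, f p := by
  have hchildren := fun {p} hp => funext (childrenIn_biUnion (ρ := ρ) hne hdisj (p := p) hp)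
  refine sum_nbij' (fun δ' ℓ => childrenIn δ' ℓ) (fun p => univ.biUnion p) ?_ ?_ ?_ ?_
    fun _ _ => rfl
  · intro δ' hδ'
    obtain ⟨p, hp, rfl⟩ := stepRel_iff_exists_isChildSet.mp (mem_filter.mp hδ').2
    rw [hchildren hp, Fintype.mem_piFinset]
    exact fun ℓ => mem_childSets.mpr (hp ℓ)
  · intro p hp
    exact mem_filter.mpr ⟨mem_univ _, stepRel_iff_exists_isChildSet.mpr
      ⟨p, fun ℓ => mem_childSets.mp (Fintype.mem_piFinset.mp hp ℓ), rfl⟩⟩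
  · intro δ' hδ'
    obtain ⟨p, hp, rfl⟩ := stepRel_iff_exists_isChildSet.mp (mem_filter.mp hδ').2
    rw [hchildren hp]
  · intro p hp
    exact hchildren fun ℓ => mem_childSets.mp (Fintype.mem_piFinset.mp hp ℓ)

theorem sum_Pmat_eq_one (hρ : IsProbVec ρ) (hne : ∀ ℓ ∈ δ, ℓ.Nonempty)
    (hdisj : (δ : Set (Finset I)).PairwiseDisjoint id) :
    ∑ δ', Pmat ρ δ δ' = 1 := by
  calc ∑ δ', Pmat ρ δ δ'
      = ∑ δ' ∈ univ.filter (stepRel ρ δ), ∏ ℓ : δ, ∑ m ∈ childrenIn δ' ℓ, rhoC ρ ℓ m := by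
        rw [sum_filter]
        refine sum_congr rfl fun δ' _ => ?_
        split_ifs with h
        · rw [Pmat_of_stepRel hne hdisj h, ← prod_coe_sort]
        · exact if_neg h
    _ = ∑ p ∈ Fintype.piFinset fun ℓ : δ => childSets ρ ℓ, ∏ ℓ, ∑ m ∈ p ℓ, rhoC ρ ℓ m :=
        sum_stepRel_eq_sum_piFinset hne hdisj fun p => ∏ ℓ, ∑ m ∈ p ℓ, rhoC ρ ℓ m
    _ = ∏ ℓ : δ, ∑ s ∈ childSets ρ ℓ, ∑ m ∈ s, rhoC ρ ℓ m :=
        (prod_univ_sum (fun ℓ : δ => childSets ρ ℓ) fun ℓ s => ∑ m ∈ s, rhoC ρ ℓ m).symm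
    _ = 1 := prod_eq_one fun ℓ _ => sum_childSets_sum_rhoC hρ ℓ

omit [DecidableEq I] in
theorem nonempty_of_isProbVec (hρ : IsProbVec ρ) : Nonempty I := by
  obtain ⟨J, -, hJ⟩ := exists_ne_zero_of_sum_ne_zero (hρ.2.2 ▸ one_ne_zero : ∑ J, ρ J ≠ 0)
  obtain ⟨i, -⟩ := nonempty_iff_ne_empty.mpr fun h : J = ∅ => hJ (h ▸ hρ.1)
  exact ⟨i⟩

omit [Fintype I] [DecidableEq I] in
@[simp]
theorem leafOf_snoc {n : ℕ} (b : Fin (n + 1) → Finset I) (ℓ : Finset I) :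
    leafOf (Fin.snoc b ℓ : Fin (n + 2) → Finset I) = ℓ := by
  simp [leafOf]

theorem IsTree.leafOf_nonempty [Nonempty I] {n : ℕ} {T : Finset (Fin (n + 1) → Finset I)}
    (hT : IsTree ρ n T) : ∀ b ∈ T, (leafOf b).Nonempty := by
  induction hT with
  | zero => simp [leafOf]
  | @succ n T ext _ hext ih =>
    intro b' hb'
    obtain ⟨b, hb, hb'⟩ := mem_biUnion.mp hb'
    rcases hext b hb with ⟨-, hE⟩ | ⟨-, J, -, -, hJ, hJc, hE⟩
    · rw [hE, mem_singleton] at hb'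
      rw [hb', leafOf_snoc]
      exact ih b hb
    · rw [hE, mem_insert, mem_singleton] at hb'
      rcases hb' with rfl | rfl <;> simpa

theorem IsTree.pairwiseDisjoint_leafOf {n : ℕ} {T : Finset (Fin (n + 1) → Finset I)}
    (hT : IsTree ρ n T) : (T : Set (Fin (n + 1) → Finset I)).PairwiseDisjoint leafOf := by
  induction hT with
  | zero => simp
  | @succ n T ext _ hext ih =>
    have hchild : ∀ b ∈ T, (ext b).sup leafOf ≤ leafOf b ∧
        (ext b : Set (Fin (n + 2) → Finset I)).PairwiseDisjoint leafOf := by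
      intro b hb
      rcases hext b hb with ⟨-, hE⟩ | ⟨-, J, -, -, -, -, hE⟩
      · simp [hE]
      · have hJ : Disjoint (leafOf b ∩ J) (leafOf b \ J) := (disjoint_sdiff_inter _ _).symm
        rw [hE, coe_pair]
        refine ⟨by simpa using union_subset inter_subset_left sdiff_subset,
          Set.pairwise_pair.mpr fun _ => ?_⟩
        simpa [Function.onFun] using And.intro hJ hJ.symm
    rw [coe_biUnion]
    exact (ih.mono_on fun b hb => (hchild b hb).1).biUnion_finset fun b hb => (hchild b hb).2

end RowStochastic

/-- Lemma 5.1: the matrix `P` is row-stochastic on the leaf partitions. -/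
theorem Pmat_row_stochastic {I : Type u} [Fintype I] [DecidableEq I]
    (ρ : Finset I → ℝ) (hρ : IsProbVec ρ)
    (δ : Finset (Finset I)) (hδ : LeafPartAny ρ δ) :
    ∑ δ' : Finset (Finset I), Pmat ρ δ δ' = 1 := by
  obtain ⟨n, T, hT, rfl⟩ := hδ
  have := nonempty_of_isProbVec hρ
  refine sum_Pmat_eq_one hρ ?_ ?_
  · simpa using hT.leafOf_nonempty
  · rw [coe_image]
    exact hT.pairwiseDisjoint_leafOf.image_id
end
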